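/- Let γ ∈ ℝ with γ ≠ 0 and |γ| ≠ 1, and let s < 1/2. Then the estimate ‖B̃_γ(f,g;s)‖_{L²(ℝ×ℤ)} ≤ C ‖f‖_{L²(ℝ×ℤ)} ‖g‖_{L²(ℝ×ℤ)} fails: for every constant C > 0 there exist nonnegative functions f, g ∈ L²(ℝ×ℤ) with ‖B̃_γ(f,g;s)‖_{L²(ℝ×ℤ)} > C ‖f‖_{L²(ℝ×ℤ)} ‖g‖_{L²(ℝ×ℤ)}. -/

import Mathlib

open MeasureTheory ENNReal

/-- Japanese bracket `⟨x⟩ = 1 + |x|`. -/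
noncomputable def jb (x : ℝ) : ℝ := 1 + |x|

/-- The `L²(ℝ×ℤ)` norm (valued in `ℝ≥0∞`) of a nonnegative function,
with respect to the product of Lebesgue measure on `ℝ` and counting measure on `ℤ`. -/
noncomputable def l2RZ (f : ℝ × ℤ → ℝ) : ℝ≥0∞ :=
  (∑' n : ℤ, ∫⁻ τ : ℝ, ENNReal.ofReal (f (τ, n)) ^ 2) ^ (1/2 : ℝ)

/-- The bilinear form `B̃_γ(f,g;s)(τ,n)`, dual to the estimate
`‖∂ₓ(u v̄)‖_{Y_{γ,per}^{s−1/2,−1/2}} ≲ ‖u‖_{X_{per}^{s,1/2}} ‖v‖_{X_{per}^{s,1/2}}`. -/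
noncomputable def Bγt (γ s : ℝ) (f g : ℝ × ℤ → ℝ) (τ : ℝ) (n : ℤ) : ℝ≥0∞ :=
  ENNReal.ofReal (|(n : ℝ)| * jb (n : ℝ) ^ (s - 1/2)
      / jb (τ + γ * |(n : ℝ)| * (n : ℝ)) ^ (1/2 : ℝ)) *
    ∑' n₁ : ℤ, ∫⁻ τ₁ : ℝ,
      ENNReal.ofReal (f (τ₁, n₁) * g (τ - τ₁, n - n₁) /
        (jb (n₁ : ℝ) ^ s * jb (τ₁ + (n₁ : ℝ) ^ 2) ^ (1/2 : ℝ)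
          * jb ((n : ℝ) - (n₁ : ℝ)) ^ s
          * jb (τ - τ₁ - ((n : ℝ) - (n₁ : ℝ)) ^ 2) ^ (1/2 : ℝ)))

lemma jb_pos (x : ℝ) : 0 < jb x := by
  have := abs_nonneg x
  simp only [jb]; linarith

lemma jb_rpow_pos (x r : ℝ) : 0 < jb x ^ r := Real.rpow_pos_of_pos (jb_pos x) r

/-- If `jb t ≤ 4` then `jb t ^ (1/2) ≤ 2`. -/
lemma jb_half_le_two {t : ℝ} (h : jb t ≤ 4) : jb t ^ (1/2 : ℝ) ≤ 2 := by
  have h4 : (4 : ℝ) ^ (1/2 : ℝ) = 2 := by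
    rw [show (4:ℝ) = 2 ^ (2:ℕ) by norm_num, ← Real.rpow_natCast 2 2,
      ← Real.rpow_mul (by norm_num)]
    norm_num
  calc jb t ^ (1/2 : ℝ) ≤ (4 : ℝ) ^ (1/2 : ℝ) :=
        Real.rpow_le_rpow (jb_pos t).le h (by norm_num)
  _ = 2 := h4

lemma exists_good_approx (a : ℝ) (M : ℕ) :
    ∃ N : ℕ, M ≤ N ∧ 0 < N ∧ ∃ j : ℤ, |a * N - j| ≤ 1 / N := by
  by_cases ha : Irrational a
  · have hε : ∀ k ∈ Finset.Icc 1 M, 0 < |(k : ℝ) * a - round ((k : ℝ) * a)| := by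
      intro k hk
      rw [Finset.mem_Icc] at hk
      have hirr : Irrational ((k : ℝ) * a) := ha.natCast_mul (m := k) (by omega)
      have : (k : ℝ) * a ≠ (round ((k : ℝ) * a) : ℤ) := hirr.ne_int _
      simpa [sub_ne_zero] using abs_pos.mpr (sub_ne_zero.mpr this)
    by_cases hM : M = 0
    · obtain ⟨j, k, hk0, hk1, h⟩ := Real.exists_int_int_abs_mul_sub_le a (n := 1) one_pos
      refine ⟨k.toNat, by omega, by omega, j, ?_⟩
      have hkk : ((k.toNat : ℕ) : ℝ) = (k : ℝ) := by
        exact_mod_cast congrArg (Int.cast : ℤ → ℝ) (Int.toNat_of_nonneg hk0.le)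
      rw [hkk, mul_comm]
      refine h.trans ?_
      have : (k : ℝ) ≤ 2 := by exact_mod_cast by omega
      have hk0' : (0 : ℝ) < k := by exact_mod_cast hk0
      rw [div_le_div_iff₀ (by norm_num) hk0']
      push_cast
      nlinarith
    · set ε := (Finset.Icc 1 M).inf' (by simp [Finset.nonempty_Icc]; omega)
        (fun k : ℕ => |(k : ℝ) * a - round ((k : ℝ) * a)|) with hεdef
      have hεpos : 0 < ε := by
        rw [hεdef]
        apply Finset.lt_inf'_iff _ |>.mpr
        intro k hk; exact hε k hk
      obtain ⟨n, hn⟩ : ∃ n : ℕ, 0 < n ∧ M ≤ n ∧ 1 / ((n : ℝ) + 1) < ε := by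
        refine ⟨M + ⌈1/ε⌉₊ + 1, by omega, by omega, ?_⟩
        rw [div_lt_iff₀ (by positivity)]
        have h1 : 1/ε ≤ (⌈1/ε⌉₊ : ℝ) := Nat.le_ceil _
        have h2 : (⌈1/ε⌉₊ : ℝ) < (M + ⌈1/ε⌉₊ + 1 : ℕ) + 1 := by
          push_cast; linarith [Nat.cast_nonneg (α := ℝ) M]
        calc (1:ℝ) = ε * (1/ε) := by field_simp
        _ ≤ ε * (⌈1/ε⌉₊ : ℝ) := by nlinarith
        _ < ε * (((M + ⌈1/ε⌉₊ + 1 : ℕ) : ℝ) + 1) := by nlinarith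
      obtain ⟨j, k, hk0, hk1, h⟩ := Real.exists_int_int_abs_mul_sub_le a hn.1
      have hkM : (M : ℤ) < k := by
        by_contra hle
        push_neg at hle
        have hkmem : k.toNat ∈ Finset.Icc 1 M := by
          simp [Finset.mem_Icc]; omega
        have h1 : ε ≤ |(k.toNat : ℝ) * a - round ((k.toNat : ℝ) * a)| :=
          Finset.inf'_le _ hkmem
        have hkk : ((k.toNat : ℕ) : ℝ) = (k : ℝ) := by
          exact_mod_cast congrArg (Int.cast : ℤ → ℝ) (Int.toNat_of_nonneg hk0.le)
        rw [hkk] at h1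
        have h2 := (round_le ((k:ℝ) * a) j)
        linarith [hn.2.2]
      refine ⟨k.toNat, by omega, by omega, j, ?_⟩
      have hkk : ((k.toNat : ℕ) : ℝ) = (k : ℝ) := by
        exact_mod_cast congrArg (Int.cast : ℤ → ℝ) (Int.toNat_of_nonneg hk0.le)
      rw [hkk, mul_comm]
      refine h.trans ?_
      have hk0' : (0 : ℝ) < k := by exact_mod_cast hk0
      have : (k : ℝ) ≤ (n : ℝ) := by exact_mod_cast hk1
      rw [div_le_div_iff₀ (by positivity) hk0']
      nlinarith
  · have ha' : a ∈ Set.range ((↑) : ℚ → ℝ) := not_not.mp ha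
    obtain ⟨q, hq⟩ := ha'
    refine ⟨(M+1) * q.den, ?_, by positivity, ((M:ℤ)+1) * q.num, ?_⟩
    · have := q.pos
      calc M ≤ (M+1) * 1 := by omega
      _ ≤ (M+1) * q.den := by exact Nat.mul_le_mul_left _ (by omega)
    · have : a * ((M+1) * q.den : ℕ) - (((M:ℤ)+1) * q.num : ℤ) = 0 := by
        rw [← hq]
        push_cast
        have hqq : (q : ℝ) * q.den = q.num := by
          exact_mod_cast congrArg (Rat.cast : ℚ → ℝ) (Rat.mul_den_eq_num q)
        nlinarith [hqq]
      rw [this, abs_zero]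
      positivity

/-- Indicator-type function used in the counterexample. -/
noncomputable def indF (m0 : ℤ) (t0 : ℝ) : ℝ × ℤ → ℝ :=
  fun p => if p.2 = m0 ∧ p.1 ∈ Set.Icc t0 (t0 + 1) then 1 else 0

lemma indF_nonneg (m0 : ℤ) (t0 : ℝ) : ∀ p, 0 ≤ indF m0 t0 p := by
  intro p
  unfold indF
  split <;> norm_num

lemma indF_measurable (m0 : ℤ) (t0 : ℝ) : Measurable (indF m0 t0) := by
  unfold indF
  have hA : MeasurableSet {p : ℝ × ℤ | p.2 = m0 ∧ p.1 ∈ Set.Icc t0 (t0 + 1)} := by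
    have h1 : MeasurableSet {p : ℝ × ℤ | p.2 = m0} :=
      measurable_snd (measurableSet_singleton m0)
    have h2 : MeasurableSet {p : ℝ × ℤ | p.1 ∈ Set.Icc t0 (t0 + 1)} :=
      measurable_fst measurableSet_Icc
    exact h1.inter h2
  exact Measurable.ite hA measurable_const measurable_const

lemma indF_value {m0 : ℤ} {t0 : ℝ} {τ : ℝ} {m : ℤ} (hm : m = m0)
    (h1 : t0 ≤ τ) (h2 : τ ≤ t0 + 1) : indF m0 t0 (τ, m) = 1 := by
  unfold indF
  rw [if_pos ⟨hm, Set.mem_Icc.mpr ⟨h1, h2⟩⟩]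

lemma l2RZ_indF (m0 : ℤ) (t0 : ℝ) : l2RZ (indF m0 t0) = 1 := by
  unfold l2RZ
  have hterm : ∀ m : ℤ, (∫⁻ τ : ℝ, ENNReal.ofReal (indF m0 t0 (τ, m)) ^ 2)
      = if m = m0 then 1 else 0 := by
    intro m
    by_cases hm : m = m0
    · subst hm
      rw [if_pos rfl]
      have hfun : (fun τ : ℝ => ENNReal.ofReal (indF m t0 (τ, m)) ^ 2)
          = (Set.Icc t0 (t0+1)).indicator (fun _ => (1 : ℝ≥0∞)) := by
        funext τ
        by_cases hτ : τ ∈ Set.Icc t0 (t0+1)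
        · rw [Set.indicator_of_mem hτ]
          unfold indF
          rw [if_pos ⟨rfl, hτ⟩]
          norm_num
        · rw [Set.indicator_of_notMem hτ]
          unfold indF
          rw [if_neg (by tauto)]
          norm_num
      rw [hfun, lintegral_indicator_const measurableSet_Icc, Real.volume_Icc]
      norm_num
    · rw [if_neg hm]
      have hfun : (fun τ : ℝ => ENNReal.ofReal (indF m0 t0 (τ, m)) ^ 2)
          = fun _ => 0 := by
        funext τ
        unfold indF
        rw [if_neg (by tauto)]
        norm_num
      rw [hfun, lintegral_zero]
  calc (∑' m : ℤ, ∫⁻ τ : ℝ, ENNReal.ofReal (indF m0 t0 (τ, m)) ^ 2) ^ (1/2 : ℝ)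
      = (∑' m : ℤ, if m = m0 then (1:ℝ≥0∞) else 0) ^ (1/2 : ℝ) := by
        congr 1; exact tsum_congr hterm
  _ = (1 : ℝ≥0∞) ^ (1/2 : ℝ) := by rw [tsum_ite_eq m0]
  _ = 1 := ENNReal.one_rpow _

set_option maxHeartbeats 2000000 in
/-- For `γ ≠ 0`, `|γ| ≠ 1` and `s < 1/2`, the bilinear estimate for `B̃_γ` fails. -/
theorem periodic_bilinear_estimate_Y_fails (γ s : ℝ) (hγ : γ ≠ 0) (hγ1 : |γ| ≠ 1)
    (hs : s < 1/2) :
    ∀ C : ℝ, 0 < C → ∃ f g : ℝ × ℤ → ℝ,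
      Measurable f ∧ Measurable g ∧ (∀ p, 0 ≤ f p) ∧ (∀ p, 0 ≤ g p) ∧
      l2RZ f ≠ ⊤ ∧ l2RZ g ≠ ⊤ ∧
      ENNReal.ofReal C * l2RZ f * l2RZ g <
        (∑' n : ℤ, ∫⁻ τ : ℝ, (Bγt γ s f g τ n) ^ 2) ^ (1/2 : ℝ) := by
  intro C hC
  -- basic constants
  set a : ℝ := (1 + γ)/2 with ha_def
  set b : ℝ := (1 - γ)/2 with hb_def
  have ha : a ≠ 0 := by
    intro h
    apply hγ1
    have : γ = -1 := by rw [ha_def] at h; linarith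
    rw [this]; norm_num
  have hb : b ≠ 0 := by
    intro h
    apply hγ1
    have : γ = 1 := by rw [hb_def] at h; linarith
    rw [this]; norm_num
  have ha' : 0 < |a| := abs_pos.mpr ha
  have hb' : 0 < |b| := abs_pos.mpr hb
  set c : ℝ := min |a| |b| / 2 with hc_def
  have hc : 0 < c := by positivity
  set K : ℝ := |a| + |b| + 2 with hK_def
  have hK : 0 < K := by positivity
  set c₂ : ℝ := min (K ^ (-(2*s))) (c ^ (-(2*s))) with hc₂_def
  have hc₂ : 0 < c₂ := lt_min (Real.rpow_pos_of_pos hK _) (Real.rpow_pos_of_pos hc _)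
  set e : ℝ := 1/2 - s with he_def
  have he : 0 < e := by rw [he_def]; linarith
  set c₇ : ℝ := 2 ^ (s - 1/2) * c₂ / 16 with hc₇_def
  have h2pow : (0:ℝ) < 2 ^ (s - 1/2) := Real.rpow_pos_of_pos two_pos _
  have hc₇ : 0 < c₇ := by rw [hc₇_def]; positivity
  set X : ℝ := max (2/|a| + 2/|b| + 1) ((2*C/c₇ + 1) ^ (1/e)) with hX_def
  obtain ⟨N, hNM, hN0, n₁, hj⟩ := exists_good_approx a (⌈X⌉₊ + 1)
  have hNX : X ≤ (N : ℝ) := by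
    calc X ≤ (⌈X⌉₊ : ℝ) := Nat.le_ceil X
    _ ≤ ((⌈X⌉₊ + 1 : ℕ) : ℝ) := by push_cast; linarith
    _ ≤ (N : ℝ) := by exact_mod_cast hNM
  have hN1 : (1:ℝ) ≤ N := by exact_mod_cast hN0
  have hNpos : (0:ℝ) < N := by linarith
  -- size estimates for n₁ and N - n₁
  have hNa : 2/|a| ≤ (N:ℝ) := by
    refine le_trans (le_trans ?_ (le_max_left (2/|a| + 2/|b| + 1) _)) hNX
    have h2b : (0:ℝ) ≤ 2/|b| := by positivity
    linarith
  have hNb : 2/|b| ≤ (N:ℝ) := by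
    refine le_trans (le_trans ?_ (le_max_left (2/|a| + 2/|b| + 1) _)) hNX
    have h2a : (0:ℝ) ≤ 2/|a| := by positivity
    linarith
  have hinvN : 1/(N:ℝ) ≤ 1 := by rw [div_le_one hNpos]; exact hN1
  have hinvNpos : (0:ℝ) < 1/N := by positivity
  have habs₁ : |(n₁:ℝ)| ≤ |a| * N + 1 := by
    have h1 : |(n₁:ℝ)| - |a * N| ≤ |a * N - (n₁:ℝ)| := by
      rw [abs_sub_comm (a * (N:ℝ)) ((n₁:ℝ))]; exact abs_sub_abs_le_abs_sub _ _
    have h2 : |a * N| = |a| * N := by rw [abs_mul, abs_of_pos hNpos]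
    linarith only [h1, h2, hj, hinvN]
  have habs₁' : c * N ≤ |(n₁:ℝ)| := by
    have h1 : |a * N| - |(n₁:ℝ)| ≤ |a * N - (n₁:ℝ)| := abs_sub_abs_le_abs_sub _ _
    have h2 : |a * N| = |a| * N := by rw [abs_mul, abs_of_pos hNpos]
    have h3 : 1/(N:ℝ) ≤ |a| * N / 2 := by
      rw [div_le_div_iff₀ hNpos (by norm_num)]
      calc (1:ℝ) * 2 = |a| * (2/|a|) := by field_simp
      _ ≤ |a| * N := mul_le_mul_of_nonneg_left hNa ha'.le
      _ ≤ |a| * N * N := le_mul_of_one_le_right (by positivity) hN1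
    have hcm : c ≤ |a|/2 := by
      rw [hc_def]; have := min_le_left |a| |b|; linarith
    linarith only [h1, h2, h3, hj, mul_le_mul_of_nonneg_right hcm hNpos.le]
  have hbn : b * N - ((N:ℝ) - (n₁:ℝ)) = -(a * N - (n₁:ℝ)) := by
    rw [hb_def, ha_def]; ring
  have hj₂ : |b * N - ((N:ℝ) - (n₁:ℝ))| ≤ 1/N := by rw [hbn, abs_neg]; exact hj
  have habs₂ : |(N:ℝ) - (n₁:ℝ)| ≤ |b| * N + 1 := by
    have h1 : |(N:ℝ) - (n₁:ℝ)| - |b * N| ≤ |b * N - ((N:ℝ) - (n₁:ℝ))| := by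
      rw [abs_sub_comm (b * (N:ℝ)) ((N:ℝ) - (n₁:ℝ))]; exact abs_sub_abs_le_abs_sub _ _
    have h2 : |b * N| = |b| * N := by rw [abs_mul, abs_of_pos hNpos]
    linarith only [h1, h2, hj₂, hinvN]
  have habs₂' : c * N ≤ |(N:ℝ) - (n₁:ℝ)| := by
    have h1 : |b * N| - |(N:ℝ) - (n₁:ℝ)| ≤ |b * N - ((N:ℝ) - (n₁:ℝ))| :=
      abs_sub_abs_le_abs_sub _ _
    have h2 : |b * N| = |b| * N := by rw [abs_mul, abs_of_pos hNpos]
    have h3 : 1/(N:ℝ) ≤ |b| * N / 2 := by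
      rw [div_le_div_iff₀ hNpos (by norm_num)]
      calc (1:ℝ) * 2 = |b| * (2/|b|) := by field_simp
      _ ≤ |b| * N := mul_le_mul_of_nonneg_left hNb hb'.le
      _ ≤ |b| * N * N := le_mul_of_one_le_right (by positivity) hN1
    have hcm : c ≤ |b|/2 := by
      rw [hc_def]; have := min_le_right |a| |b|; linarith
    linarith only [h1, h2, h3, hj₂, mul_le_mul_of_nonneg_right hcm hNpos.le]
  have hjb₁_ub : jb (n₁:ℝ) ≤ K * N := by
    unfold jb; rw [hK_def]
    have hbN : 0 ≤ |b| * N := by positivity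
    have haN : 0 ≤ |a| * N := by positivity
    linarith only [habs₁, hbN, hN1, haN]
  have hjb₂_ub : jb ((N:ℝ) - (n₁:ℝ)) ≤ K * N := by
    unfold jb; rw [hK_def]
    have hbN : 0 ≤ |b| * N := by positivity
    have haN : 0 ≤ |a| * N := by positivity
    linarith only [habs₂, hbN, hN1, haN]
  have hjb₁_lb : c * N ≤ jb (n₁:ℝ) := by
    unfold jb; linarith only [habs₁']
  have hjb₂_lb : c * N ≤ jb ((N:ℝ) - (n₁:ℝ)) := by
    unfold jb; linarith only [habs₂']
  -- bound on M'
  set M' : ℝ := jb (n₁:ℝ) ^ s * jb ((N:ℝ) - (n₁:ℝ)) ^ s with hM'_def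
  have hM'pos : 0 < M' := mul_pos (jb_rpow_pos _ _) (jb_rpow_pos _ _)
  have hNrpow : (0:ℝ) < (N:ℝ) ^ (2*s) := Real.rpow_pos_of_pos hNpos _
  have hM'bound : M' ≤ (N:ℝ) ^ (2*s) / c₂ := by
    rcases le_or_gt 0 s with hs0 | hs0
    · have hKN : (0:ℝ) < K * N := by positivity
      have h1 : jb (n₁:ℝ) ^ s ≤ (K * N) ^ s :=
        Real.rpow_le_rpow (jb_pos _).le hjb₁_ub hs0
      have h2 : jb ((N:ℝ) - (n₁:ℝ)) ^ s ≤ (K * N) ^ s :=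
        Real.rpow_le_rpow (jb_pos _).le hjb₂_ub hs0
      have h3 : M' ≤ (K * N) ^ s * (K * N) ^ s :=
        mul_le_mul h1 h2 (jb_rpow_pos _ _).le (Real.rpow_pos_of_pos hKN _).le
      have h4 : (K * N) ^ s * (K * N) ^ s = K ^ (2*s) * (N:ℝ) ^ (2*s) := by
        rw [← Real.rpow_add hKN, Real.mul_rpow hK.le hNpos.le]
        ring_nf
      have h5 : K ^ (2*s) ≤ 1 / c₂ := by
        have hKm : c₂ ≤ K ^ (-(2*s)) := min_le_left _ _
        rw [Real.rpow_neg hK.le] at hKm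
        have hKp : (0:ℝ) < K ^ (2*s) := Real.rpow_pos_of_pos hK _
        rw [le_div_iff₀ hc₂]
        calc K ^ (2*s) * c₂ ≤ K ^ (2*s) * (K ^ (2*s))⁻¹ :=
              mul_le_mul_of_nonneg_left hKm hKp.le
        _ = 1 := mul_inv_cancel₀ hKp.ne'
      calc M' ≤ K ^ (2*s) * (N:ℝ) ^ (2*s) := by rw [← h4]; exact h3
      _ ≤ (1/c₂) * (N:ℝ) ^ (2*s) := mul_le_mul_of_nonneg_right h5 hNrpow.le
      _ = (N:ℝ) ^ (2*s) / c₂ := by ring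
    · have hcN : (0:ℝ) < c * N := by positivity
      have h1 : jb (n₁:ℝ) ^ s ≤ (c * N) ^ s :=
        Real.rpow_le_rpow_of_nonpos hcN hjb₁_lb hs0.le
      have h2 : jb ((N:ℝ) - (n₁:ℝ)) ^ s ≤ (c * N) ^ s :=
        Real.rpow_le_rpow_of_nonpos hcN hjb₂_lb hs0.le
      have h3 : M' ≤ (c * N) ^ s * (c * N) ^ s :=
        mul_le_mul h1 h2 (jb_rpow_pos _ _).le (Real.rpow_pos_of_pos hcN _).le
      have h4 : (c * N) ^ s * (c * N) ^ s = c ^ (2*s) * (N:ℝ) ^ (2*s) := by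
        rw [← Real.rpow_add hcN, Real.mul_rpow hc.le hNpos.le]
        ring_nf
      have h5 : c ^ (2*s) ≤ 1 / c₂ := by
        have hKm : c₂ ≤ c ^ (-(2*s)) := min_le_right _ _
        rw [Real.rpow_neg hc.le] at hKm
        have hKp : (0:ℝ) < c ^ (2*s) := Real.rpow_pos_of_pos hc _
        rw [le_div_iff₀ hc₂]
        calc c ^ (2*s) * c₂ ≤ c ^ (2*s) * (c ^ (2*s))⁻¹ :=
              mul_le_mul_of_nonneg_left hKm hKp.le
        _ = 1 := mul_inv_cancel₀ hKp.ne'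
      calc M' ≤ c ^ (2*s) * (N:ℝ) ^ (2*s) := by rw [← h4]; exact h3
      _ ≤ (1/c₂) * (N:ℝ) ^ (2*s) := mul_le_mul_of_nonneg_right h5 hNrpow.le
      _ = (N:ℝ) ^ (2*s) / c₂ := by ring
  -- the counterexample functions
  set t₀ : ℝ := -((n₁:ℝ) ^ 2) with ht₀_def
  set u₀ : ℝ := ((N:ℝ) - (n₁:ℝ)) ^ 2 with hu₀_def
  set T₀ : ℝ := ((N:ℝ) - (n₁:ℝ)) ^ 2 - (n₁:ℝ) ^ 2 with hT₀_def
  set m₂ : ℤ := (N : ℤ) - n₁ with hm₂_def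
  set f := indF n₁ t₀ with hf_def
  set g := indF m₂ u₀ with hg_def
  set L : ℝ := c₇ * (N:ℝ) ^ e with hL_def
  have hNe : (0:ℝ) < (N:ℝ) ^ e := Real.rpow_pos_of_pos hNpos _
  have hLpos : 0 < L := by rw [hL_def]; positivity
  -- pointwise lower bound on Bγt at n = N
  have key : ∀ τ ∈ Set.Icc (T₀ + 1/2) (T₀ + 1),
      ENNReal.ofReal L ≤ Bγt γ s f g τ (N : ℤ) := by
    intro τ hτ
    obtain ⟨hτ1, hτ2⟩ := Set.mem_Icc.mp hτ
    unfold Bγt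
    rw [show ((((N:ℕ):ℤ)):ℝ) = ((N:ℕ):ℝ) by push_cast; ring,
      abs_of_nonneg hNpos.le]
    -- inner tsum lower bound
    have hpt : ∀ τ₁ ∈ Set.Icc t₀ (t₀ + 1/2),
        ENNReal.ofReal (1/(4*M')) ≤
        ENNReal.ofReal (f (τ₁, n₁) * g (τ - τ₁, (N:ℤ) - n₁) /
          (jb (n₁ : ℝ) ^ s * jb (τ₁ + (n₁ : ℝ) ^ 2) ^ (1/2 : ℝ)
            * jb ((N : ℝ) - (n₁ : ℝ)) ^ s
            * jb (τ - τ₁ - ((N : ℝ) - (n₁ : ℝ)) ^ 2) ^ (1/2 : ℝ))) := by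
      intro τ₁ hτ₁
      obtain ⟨hτ₁1, hτ₁2⟩ := Set.mem_Icc.mp hτ₁
      have hfval : f (τ₁, n₁) = 1 := indF_value rfl hτ₁1 (by linarith)
      have hgb1 : u₀ ≤ τ - τ₁ := by
        rw [hu₀_def]
        rw [ht₀_def] at hτ₁2
        rw [hT₀_def] at hτ1
        linarith
      have hgb2 : τ - τ₁ ≤ u₀ + 1 := by
        rw [hu₀_def]
        rw [ht₀_def] at hτ₁1
        rw [hT₀_def] at hτ2
        linarith
      have hgval : g (τ - τ₁, (N:ℤ) - n₁) = 1 :=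
        indF_value hm₂_def.symm hgb1 hgb2
      rw [hfval, hgval]
      apply ENNReal.ofReal_le_ofReal
      rw [one_mul]
      have hA0 : 0 ≤ τ₁ + (n₁:ℝ)^2 := by rw [ht₀_def] at hτ₁1; linarith
      have hA1 : τ₁ + (n₁:ℝ)^2 ≤ 1/2 := by rw [ht₀_def] at hτ₁2; linarith
      have hA : jb (τ₁ + (n₁:ℝ)^2) ^ (1/2:ℝ) ≤ 2 := by
        apply jb_half_le_two
        unfold jb
        rw [abs_of_nonneg hA0]; linarith
      have hB0 : 0 ≤ τ - τ₁ - ((N:ℝ) - (n₁:ℝ))^2 := by rw [hu₀_def] at hgb1; linarith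
      have hB1 : τ - τ₁ - ((N:ℝ) - (n₁:ℝ))^2 ≤ 1 := by rw [hu₀_def] at hgb2; linarith
      have hB : jb (τ - τ₁ - ((N:ℝ) - (n₁:ℝ))^2) ^ (1/2:ℝ) ≤ 2 := by
        apply jb_half_le_two
        unfold jb
        rw [abs_of_nonneg hB0]; linarith
      have p1 : (0:ℝ) < jb (n₁:ℝ) ^ s := jb_rpow_pos _ _
      have p2 : (0:ℝ) < jb (τ₁ + (n₁:ℝ)^2) ^ (1/2:ℝ) := jb_rpow_pos _ _
      have p3 : (0:ℝ) < jb ((N:ℝ) - (n₁:ℝ)) ^ s := jb_rpow_pos _ _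
      have p4 : (0:ℝ) < jb (τ - τ₁ - ((N:ℝ) - (n₁:ℝ))^2) ^ (1/2:ℝ) := jb_rpow_pos _ _
      have hW : jb (n₁:ℝ) ^ s * jb (τ₁ + (n₁:ℝ)^2) ^ (1/2:ℝ)
          * jb ((N:ℝ) - (n₁:ℝ)) ^ s
          * jb (τ - τ₁ - ((N:ℝ) - (n₁:ℝ))^2) ^ (1/2:ℝ) ≤ 4 * M' := by
        have step : jb (τ₁ + (n₁:ℝ)^2) ^ (1/2:ℝ)
            * jb (τ - τ₁ - ((N:ℝ) - (n₁:ℝ))^2) ^ (1/2:ℝ) ≤ 2 * 2 :=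
          mul_le_mul hA hB p4.le (by norm_num)
        calc jb (n₁:ℝ) ^ s * jb (τ₁ + (n₁:ℝ)^2) ^ (1/2:ℝ)
            * jb ((N:ℝ) - (n₁:ℝ)) ^ s
            * jb (τ - τ₁ - ((N:ℝ) - (n₁:ℝ))^2) ^ (1/2:ℝ)
            = (jb (n₁:ℝ) ^ s * jb ((N:ℝ) - (n₁:ℝ)) ^ s)
              * (jb (τ₁ + (n₁:ℝ)^2) ^ (1/2:ℝ)
                * jb (τ - τ₁ - ((N:ℝ) - (n₁:ℝ))^2) ^ (1/2:ℝ)) := by ring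
        _ ≤ (jb (n₁:ℝ) ^ s * jb ((N:ℝ) - (n₁:ℝ)) ^ s) * (2*2) :=
            mul_le_mul_of_nonneg_left step (by positivity)
        _ = 4 * M' := by rw [hM'_def]; ring
      have hWpos : (0:ℝ) < jb (n₁:ℝ) ^ s * jb (τ₁ + (n₁:ℝ)^2) ^ (1/2:ℝ)
          * jb ((N:ℝ) - (n₁:ℝ)) ^ s
          * jb (τ - τ₁ - ((N:ℝ) - (n₁:ℝ))^2) ^ (1/2:ℝ) := by positivity
      calc 1/(4*M') ≤ 1/(jb (n₁:ℝ) ^ s * jb (τ₁ + (n₁:ℝ)^2) ^ (1/2:ℝ)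
            * jb ((N:ℝ) - (n₁:ℝ)) ^ s
            * jb (τ - τ₁ - ((N:ℝ) - (n₁:ℝ))^2) ^ (1/2:ℝ)) :=
          one_div_le_one_div_of_le hWpos hW
      _ = 1 / (jb (n₁:ℝ) ^ s * jb (τ₁ + (n₁:ℝ)^2) ^ (1/2:ℝ)
            * jb ((N:ℝ) - (n₁:ℝ)) ^ s
            * jb (τ - τ₁ - ((N:ℝ) - (n₁:ℝ))^2) ^ (1/2:ℝ)) := rfl
    have hS : ENNReal.ofReal (1/(8*M')) ≤
        ∑' k : ℤ, ∫⁻ τ₁ : ℝ,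
          ENNReal.ofReal (f (τ₁, k) * g (τ - τ₁, (N:ℤ) - k) /
            (jb (k : ℝ) ^ s * jb (τ₁ + (k : ℝ) ^ 2) ^ (1/2 : ℝ)
              * jb ((N : ℝ) - (k : ℝ)) ^ s
              * jb (τ - τ₁ - ((N : ℝ) - (k : ℝ)) ^ 2) ^ (1/2 : ℝ))) := by
      refine le_trans ?_ (ENNReal.le_tsum n₁)
      calc ENNReal.ofReal (1/(8*M'))
          = ENNReal.ofReal (1/(4*M')) * ENNReal.ofReal (1/2) := by
            rw [← ENNReal.ofReal_mul (by positivity)]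
            congr 1
            field_simp
            ring
      _ = ENNReal.ofReal (1/(4*M')) * volume (Set.Icc t₀ (t₀ + 1/2)) := by
            rw [Real.volume_Icc, show t₀ + 1/2 - t₀ = 1/2 by ring]
      _ = ∫⁻ τ₁ : ℝ, (Set.Icc t₀ (t₀ + 1/2)).indicator
            (fun _ => ENNReal.ofReal (1/(4*M'))) τ₁ :=
          (lintegral_indicator_const measurableSet_Icc _).symm
      _ ≤ _ := by
          apply lintegral_mono
          intro τ₁
          by_cases hmem : τ₁ ∈ Set.Icc t₀ (t₀ + 1/2)
          · rw [Set.indicator_of_mem hmem]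
            exact hpt τ₁ hmem
          · rw [Set.indicator_of_notMem hmem]
            exact zero_le
    -- prefactor estimate
    have hbr : jb (τ + γ * (N:ℝ) * (N:ℝ)) ≤ 4 := by
      have hrw : τ + γ * (N:ℝ) * (N:ℝ)
          = (τ - T₀) + 2*(N:ℝ)*(a * N - (n₁:ℝ)) := by
        rw [hT₀_def, ha_def]; ring
      have h1 : |2*(N:ℝ)*(a * N - (n₁:ℝ))| ≤ 2 := by
        rw [abs_mul, abs_of_nonneg (by positivity : (0:ℝ) ≤ 2*(N:ℝ))]
        calc 2*(N:ℝ) * |a * N - (n₁:ℝ)| ≤ 2*(N:ℝ) * (1/N) :=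
            mul_le_mul_of_nonneg_left hj (by positivity)
        _ = 2 := by field_simp
      have h2 : |τ - T₀| ≤ 1 := abs_le.mpr ⟨by linarith, by linarith⟩
      have h3 := abs_add_le (τ - T₀) (2*(N:ℝ)*(a * N - (n₁:ℝ)))
      unfold jb
      rw [hrw]
      linarith
    have hbrpow : jb (τ + γ * (N:ℝ) * (N:ℝ)) ^ (1/2:ℝ) ≤ 2 := jb_half_le_two hbr
    have hjbN : ((2:ℝ)*N) ^ (s - 1/2) ≤ jb (N:ℝ) ^ (s - 1/2) := by
      apply Real.rpow_le_rpow_of_nonpos (jb_pos _)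
      · unfold jb; rw [abs_of_nonneg hNpos.le]; linarith
      · linarith
    set P : ℝ := (N:ℝ) * jb (N:ℝ) ^ (s - 1/2)
        / jb (τ + γ * (N:ℝ) * (N:ℝ)) ^ (1/2:ℝ) with hP_def
    have hPpos : 0 < P := by
      rw [hP_def]
      exact div_pos (mul_pos hNpos (jb_rpow_pos _ _)) (jb_rpow_pos _ _)
    have hP1 : (N:ℝ) * ((2:ℝ)*N) ^ (s - 1/2) / 2 ≤ P := by
      rw [hP_def]
      calc (N:ℝ) * ((2:ℝ)*N) ^ (s - 1/2) / 2
          ≤ (N:ℝ) * jb (N:ℝ) ^ (s - 1/2) / 2 := by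
            apply div_le_div_of_nonneg_right ?_ (by norm_num)
            exact mul_le_mul_of_nonneg_left hjbN hNpos.le
      _ ≤ (N:ℝ) * jb (N:ℝ) ^ (s - 1/2) / jb (τ + γ * (N:ℝ) * (N:ℝ)) ^ (1/2:ℝ) := by
            apply div_le_div_of_nonneg_left ?_ (jb_rpow_pos _ _) hbrpow
            exact le_of_lt (mul_pos hNpos (jb_rpow_pos _ _))
    have hP2 : c₂ / (8 * (N:ℝ) ^ (2*s)) ≤ 1/(8*M') := by
      rw [div_le_div_iff₀ (by positivity) (mul_pos (by norm_num : (0:ℝ) < 8) hM'pos)]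
      have h := (le_div_iff₀ hc₂).mp hM'bound
      linarith only [h]
    -- the exact product identity
    have hr : (N:ℝ) * (N:ℝ) ^ (s - 1/2) = (N:ℝ) ^ (1/2 - s) * (N:ℝ) ^ (2*s) := by
      have h1 := Real.rpow_add hNpos 1 (s - 1/2)
      rw [Real.rpow_one] at h1
      rw [show (1:ℝ) + (s - 1/2) = (1/2 - s) + 2*s by ring] at h1
      have h2 := Real.rpow_add hNpos (1/2 - s) (2*s)
      exact h1.symm.trans h2
    have heq : (N:ℝ) * ((2:ℝ)*N) ^ (s - 1/2) / 2 * (c₂ / (8 * (N:ℝ) ^ (2*s))) = L := by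
      rw [Real.mul_rpow (by norm_num) hNpos.le, hL_def, hc₇_def, he_def]
      have hu : (N:ℝ) ^ (2*s) ≠ 0 := hNrpow.ne'
      calc (N:ℝ) * ((2:ℝ) ^ (s - 1/2) * (N:ℝ) ^ (s - 1/2)) / 2
            * (c₂ / (8 * (N:ℝ) ^ (2*s)))
          = ((N:ℝ) * (N:ℝ) ^ (s - 1/2)) * ((2:ℝ) ^ (s - 1/2) * c₂)
            / (16 * (N:ℝ) ^ (2*s)) := by ring
      _ = ((N:ℝ) ^ (1/2 - s) * (N:ℝ) ^ (2*s)) * ((2:ℝ) ^ (s - 1/2) * c₂)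
            / (16 * (N:ℝ) ^ (2*s)) := by rw [hr]
      _ = (2:ℝ) ^ (s - 1/2) * c₂ / 16 * (N:ℝ) ^ (1/2 - s) := by
            field_simp
    have hLP : L ≤ P * (1/(8*M')) := by
      rw [← heq]
      apply mul_le_mul hP1 hP2 (by positivity) hPpos.le
    calc ENNReal.ofReal L ≤ ENNReal.ofReal (P * (1/(8*M'))) :=
          ENNReal.ofReal_le_ofReal hLP
    _ = ENNReal.ofReal P * ENNReal.ofReal (1/(8*M')) :=
          ENNReal.ofReal_mul hPpos.le
    _ ≤ ENNReal.ofReal P * _ := mul_le_mul_right hS _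
  -- assemble
  refine ⟨f, g, indF_measurable _ _, indF_measurable _ _, indF_nonneg _ _,
    indF_nonneg _ _, ?_, ?_, ?_⟩
  · rw [hf_def, l2RZ_indF]; exact one_ne_top
  · rw [hg_def, l2RZ_indF]; exact one_ne_top
  · rw [hf_def, hg_def, l2RZ_indF, l2RZ_indF, mul_one, mul_one]
    rw [← hf_def, ← hg_def]
    have hbig : ENNReal.ofReal L ^ 2 * ENNReal.ofReal (1/2)
        ≤ ∑' n : ℤ, ∫⁻ τ : ℝ, (Bγt γ s f g τ n) ^ 2 := by
      refine le_trans ?_ (ENNReal.le_tsum ((N:ℕ):ℤ))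
      calc ENNReal.ofReal L ^ 2 * ENNReal.ofReal (1/2)
          = ENNReal.ofReal L ^ 2 * volume (Set.Icc (T₀ + 1/2) (T₀ + 1)) := by
            rw [Real.volume_Icc, show T₀ + 1 - (T₀ + 1/2) = 1/2 by ring]
      _ = ∫⁻ τ : ℝ, (Set.Icc (T₀ + 1/2) (T₀ + 1)).indicator
            (fun _ => ENNReal.ofReal L ^ 2) τ :=
          (lintegral_indicator_const measurableSet_Icc _).symm
      _ ≤ ∫⁻ τ : ℝ, (Bγt γ s f g τ ((N:ℕ):ℤ)) ^ 2 := by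
          apply lintegral_mono
          intro τ
          by_cases hmem : τ ∈ Set.Icc (T₀ + 1/2) (T₀ + 1)
          · rw [Set.indicator_of_mem hmem]
            exact pow_le_pow_left' (key τ hmem) 2
          · rw [Set.indicator_of_notMem hmem]
            exact zero_le
    have hmono := ENNReal.rpow_le_rpow hbig (by norm_num : (0:ℝ) ≤ 1/2)
    refine lt_of_lt_of_le ?_ hmono
    have hre : (ENNReal.ofReal L ^ 2 * ENNReal.ofReal (1/2)) ^ (1/2:ℝ)
        = ENNReal.ofReal L * ENNReal.ofReal (1/2) ^ (1/2:ℝ) := by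
      rw [ENNReal.mul_rpow_of_nonneg _ _ (by norm_num : (0:ℝ) ≤ 1/2)]
      congr 1
      rw [← ENNReal.rpow_natCast (ENNReal.ofReal L) 2, ← ENNReal.rpow_mul]
      norm_num
    rw [hre]
    have h12 : ENNReal.ofReal (1/2) ≤ ENNReal.ofReal (1/2) ^ (1/2:ℝ) := by
      have hle1 : ENNReal.ofReal (1/2) ≤ 1 := by
        rw [show (1:ℝ≥0∞) = ENNReal.ofReal 1 by simp]
        exact ENNReal.ofReal_le_ofReal (by norm_num)
      calc ENNReal.ofReal (1/2) = ENNReal.ofReal (1/2) ^ (1:ℝ) :=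
            (ENNReal.rpow_one _).symm
      _ ≤ ENNReal.ofReal (1/2) ^ (1/2:ℝ) :=
            ENNReal.rpow_le_rpow_of_exponent_ge hle1 (by norm_num)
    have hCL : C < L * (1/2) := by
      have hX2 : (2*C/c₇ + 1) ^ (1/e) ≤ (N:ℝ) :=
        le_trans (le_trans (le_max_right _ _) (le_refl X)) hNX
      have hx0 : (0:ℝ) ≤ 2*C/c₇ + 1 := by positivity
      have hNe2 : 2*C/c₇ + 1 ≤ (N:ℝ) ^ e := by
        have h0 : ((2*C/c₇ + 1) ^ (1/e)) ^ e ≤ (N:ℝ) ^ e :=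
          Real.rpow_le_rpow (Real.rpow_nonneg hx0 _) hX2 he.le
        rwa [← Real.rpow_mul hx0, one_div, inv_mul_cancel₀ he.ne',
          Real.rpow_one] at h0
      have : 2*C + c₇ ≤ L := by
        rw [hL_def]
        calc 2*C + c₇ = c₇ * (2*C/c₇ + 1) := by field_simp
        _ ≤ c₇ * (N:ℝ) ^ e := mul_le_mul_of_nonneg_left hNe2 hc₇.le
      linarith
    calc ENNReal.ofReal C < ENNReal.ofReal (L * (1/2)) := by
          exact ENNReal.ofReal_lt_ofReal_iff_of_nonneg hC.le |>.mpr hCL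
    _ = ENNReal.ofReal L * ENNReal.ofReal (1/2) := ENNReal.ofReal_mul hLpos.le
    _ ≤ ENNReal.ofReal L * ENNReal.ofReal (1/2) ^ (1/2:ℝ) := mul_le_mul_right h12 _
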